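/- arXiv:2502.04006 — 3 statements merged into one kernel-verified Lean document; each statement's English description precedes it below -/
import Mathlib

section
/- Let K be a closed cone in ℝⁿ and V a nonempty finite subset of ℝⁿ, and set H(V) := ∑_{h ∈ V} hhᵀ. Then for every A ∈ CP(K), one has ⟨A, H(V)⟩ = 0 if and only if A ∈ CP(V^⊥ ∩ K), where V^⊥ = {x ∈ ℝⁿ : xᵀh = 0 for all h ∈ V}. -/
open Matrix
open scoped Pointwise

noncomputable section

/-- Frobenius inner product on real `n × n` matrices:
`⟨A,B⟩ = ∑ᵢⱼ Aᵢⱼ Bᵢⱼ`. -/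
def mip {n : ℕ} (A B : Matrix (Fin n) (Fin n) ℝ) : ℝ :=
  ∑ i, ∑ j, A i j * B i j

/-- `CPset S` (also used for `S₊(X)` when `S` is a subspace): the set of matrices of the
form `∑ᵢ aᵢaᵢᵀ` for a positive number of vectors `aᵢ ∈ S`. -/
def CPset {n : ℕ} (S : Set (Fin n → ℝ)) : Set (Matrix (Fin n) (Fin n) ℝ) :=
  {A | ∃ k : ℕ, 0 < k ∧ ∃ f : Fin k → (Fin n → ℝ),
        (∀ i, f i ∈ S) ∧ A = ∑ i, Matrix.vecMulVec (f i) (f i)}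

/-- `COPset K`: symmetric matrices `A` with `xᵀAx ≥ 0` for all `x ∈ K`. -/
def COPset {n : ℕ} (K : Set (Fin n → ℝ)) : Set (Matrix (Fin n) (Fin n) ℝ) :=
  {A | A.IsSymm ∧ ∀ x ∈ K, 0 ≤ x ⬝ᵥ A.mulVec x}

/-- `F` is a face of the convex cone `C`: a nonempty convex subcone such that
`a, b ∈ C`, `a + b ∈ F` imply `a, b ∈ F`. -/
def IsFaceOf {M : Type*} [AddCommMonoid M] [Module ℝ M] (C F : Set M) : Prop :=
  F.Nonempty ∧ F ⊆ C ∧ Convex ℝ F ∧ (∀ x ∈ F, ∀ c : ℝ, 0 ≤ c → c • x ∈ F) ∧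
    ∀ a ∈ C, ∀ b ∈ C, a + b ∈ F → a ∈ F ∧ b ∈ F

/-- Exposed face of a cone of matrices (w.r.t. the trace inner product). -/
def IsExposedFaceOf {n : ℕ} (C F : Set (Matrix (Fin n) (Fin n) ℝ)) : Prop :=
  IsFaceOf C F ∧ ∃ H : Matrix (Fin n) (Fin n) ℝ,
    (∀ A ∈ C, 0 ≤ mip H A) ∧ F = {A ∈ C | mip H A = 0}

/-- Dimension of a set: dimension of its linear span. -/
def setDim {M : Type*} [AddCommGroup M] [Module ℝ M] (S : Set M) : ℕ :=
  Module.finrank ℝ (Submodule.span ℝ S)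

/-- The ray `ℝ₊ • x`. -/
def rayOf {M : Type*} [AddCommMonoid M] [Module ℝ M] (x : M) : Set M :=
  {y | ∃ c : ℝ, 0 ≤ c ∧ y = c • x}

/-- An extreme ray: a one-dimensional face. -/
def IsExtremeRayOf {M : Type*} [AddCommGroup M] [Module ℝ M] (C F : Set M) : Prop :=
  IsFaceOf C F ∧ setDim F = 1

/-- The second-order cone `L^{m+1} = {x : x₀ ≥ ‖(x₁,…,xₘ)‖}`. -/
def soc (m : ℕ) : Set (Fin (m+1) → ℝ) :=
  {x | Real.sqrt (∑ i : Fin m, x i.succ ^ 2) ≤ x 0}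

/-- The boundary `∂L^{m+1} = {x : x₀ = ‖(x₁,…,xₘ)‖}`. -/
def socBd (m : ℕ) : Set (Fin (m+1) → ℝ) :=
  {x | Real.sqrt (∑ i : Fin m, x i.succ ^ 2) = x 0}

/-- The interior `int L^{m+1} = {x : x₀ > ‖(x₁,…,xₘ)‖}`. -/
def socInt (m : ℕ) : Set (Fin (m+1) → ℝ) :=
  {x | Real.sqrt (∑ i : Fin m, x i.succ ^ 2) < x 0}

/-- The matrix `J = diag(1, −1, …, −1)`. -/
def Jmat (m : ℕ) : Matrix (Fin (m+1)) (Fin (m+1)) ℝ :=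
  Matrix.diagonal fun i => if i = 0 then 1 else -1

/-- The hyperplane `{x : x ⬝ u = 0}` as a submodule. -/
def perpHyp {n : ℕ} (u : Fin n → ℝ) : Submodule ℝ (Fin n → ℝ) where
  carrier := {x | x ⬝ᵥ u = 0}
  add_mem' := by
    intro a b ha hb
    simp only [Set.mem_setOf_eq, add_dotProduct] at *
    linarith
  zero_mem' := by simp [zero_dotProduct]
  smul_mem' := by
    intro c a ha
    simp only [Set.mem_setOf_eq, smul_dotProduct] at *
    simp [ha]

/-- A polyhedral cone: nonnegative combinations of finitely many vectors. -/
def IsPolyhedralCone {M : Type*} [AddCommMonoid M] [Module ℝ M] (S : Set M) : Prop :=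
  ∃ (k : ℕ) (g : Fin k → M),
    S = {x | ∃ c : Fin k → ℝ, (∀ i, 0 ≤ c i) ∧ x = ∑ i, c i • g i}

end

lemma mip_sum_left {n : ℕ} {ι : Type*} (s : Finset ι) (M : ι → Matrix (Fin n) (Fin n) ℝ)
    (B : Matrix (Fin n) (Fin n) ℝ) :
    mip (∑ i ∈ s, M i) B = ∑ i ∈ s, mip (M i) B := by
  simp only [mip, Matrix.sum_apply, Finset.sum_mul]
  exact (Finset.sum_congr rfl fun _ _ => Finset.sum_comm).trans Finset.sum_comm

lemma mip_sum_right {n : ℕ} {ι : Type*} (s : Finset ι) (A : Matrix (Fin n) (Fin n) ℝ)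
    (M : ι → Matrix (Fin n) (Fin n) ℝ) :
    mip A (∑ i ∈ s, M i) = ∑ i ∈ s, mip A (M i) := by
  simp only [mip, Matrix.sum_apply, Finset.mul_sum]
  exact (Finset.sum_congr rfl fun _ _ => Finset.sum_comm).trans Finset.sum_comm

lemma mip_vecMulVec {n : ℕ} (a b c d : Fin n → ℝ) :
    mip (vecMulVec a b) (vecMulVec c d) = (a ⬝ᵥ c) * (b ⬝ᵥ d) := by
  simp only [mip, vecMulVec_apply, dotProduct, Finset.sum_mul_sum]
  exact Finset.sum_congr rfl fun _ _ => Finset.sum_congr rfl fun _ _ => by ring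

lemma mip_sum_vecMulVec_self {n : ℕ} {ι : Type*} (s : Finset ι) (f : ι → Fin n → ℝ)
    (V : Finset (Fin n → ℝ)) :
    mip (∑ i ∈ s, vecMulVec (f i) (f i)) (∑ h ∈ V, vecMulVec h h) =
      ∑ i ∈ s, ∑ h ∈ V, (f i ⬝ᵥ h) ^ 2 := by
  rw [mip_sum_left]
  simp only [mip_sum_right, mip_vecMulVec, sq]

lemma mip_sum_vecMulVec_self_eq_zero_iff {n : ℕ} {ι : Type*} (s : Finset ι)
    (f : ι → Fin n → ℝ) (V : Finset (Fin n → ℝ)) :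
    mip (∑ i ∈ s, vecMulVec (f i) (f i)) (∑ h ∈ V, vecMulVec h h) = 0 ↔
      ∀ i ∈ s, ∀ h ∈ V, f i ⬝ᵥ h = 0 := by
  rw [mip_sum_vecMulVec_self,
    Finset.sum_eq_zero_iff_of_nonneg fun i _ => Finset.sum_nonneg fun h _ => sq_nonneg _]
  simp only [Finset.sum_eq_zero_iff_of_nonneg fun h _ => sq_nonneg _, sq_eq_zero_iff]

theorem stmt0_general (n : ℕ) (K : Set (Fin n → ℝ))
    (V : Finset (Fin n → ℝ))
    (A : Matrix (Fin n) (Fin n) ℝ) (hA : A ∈ CPset K) :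
    mip A (∑ h ∈ V, Matrix.vecMulVec h h) = 0 ↔
      A ∈ CPset ({x | ∀ h ∈ V, x ⬝ᵥ h = 0} ∩ K) := by
  constructor
  · obtain ⟨k, hk, f, hfK, rfl⟩ := hA
    intro hA0
    have hfV := (mip_sum_vecMulVec_self_eq_zero_iff _ f V).1 hA0
    exact ⟨k, hk, f, fun i => ⟨hfV i (Finset.mem_univ i), hfK i⟩, rfl⟩
  · rintro ⟨k, -, f, hf, rfl⟩
    exact (mip_sum_vecMulVec_self_eq_zero_iff _ f V).2 fun i _ => (hf i).1

/-- For a closed cone `K ⊆ ℝⁿ`, a nonempty finite `V ⊆ ℝⁿ`, and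
`A ∈ CP(K)`: `⟨A, H(V)⟩ = 0 ↔ A ∈ CP(V^⊥ ∩ K)`. -/
theorem stmt0 (n : ℕ) (K : Set (Fin n → ℝ)) (hKcl : IsClosed K)
    (hKcone : ∀ x ∈ K, ∀ c : ℝ, 0 ≤ c → c • x ∈ K)
    (V : Finset (Fin n → ℝ)) (hV : V.Nonempty)
    (A : Matrix (Fin n) (Fin n) ℝ) (hA : A ∈ CPset K) :
    mip A (∑ h ∈ V, Matrix.vecMulVec h h) = 0 ↔
      A ∈ CPset ({x | ∀ h ∈ V, x ⬝ᵥ h = 0} ∩ K) :=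
  stmt0_general n K V A hA
end

section
/- For n ≥ 2, the length of a longest chain of faces of COP(Lⁿ) equals n + 2; that is, there exists a chain F_{n+2} ⊊ ⋯ ⊊ F₁ of faces of COP(Lⁿ), and every chain F_l ⊊ ⋯ ⊊ F₁ of faces of COP(Lⁿ) satisfies l ≤ n + 2. -/
open Matrix
open scoped Pointwise

/-!
By the S-lemma, every `A ∈ COP(Lⁿ)` is `P + μ J` with `P ⪰ 0`, `μ ≥ 0` and
`J = diag(1, -1, …, -1)`. A face `F` is therefore determined by whether `J ∈ F` and by the common
kernel `U(F)` of its positive semidefinite members: its PSD part consists of all `P ⪰ 0` with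
`U(F) ⊆ ker P`, since such a `P` is dominated by a multiple of a PSD member of `F` with kernel
`U(F)`. Along a strict chain of faces, `n - dim U(F) + [J ∈ F]` strictly increases and takes values
in `[0, n + 1]`, so the chain has at most `n + 2` members.

Conversely, for an isotropic vector `v ≠ 0` of `J` and a subspace `U ∋ v`, the set
`{S + t J : S ⪰ 0, U ⊆ ker S, t ≥ 0}` is a face, and it grows strictly as `U` shrinks. A flag of
`n` subspaces through `v`, together with `{0}` and `COP(Lⁿ)` itself, gives a chain of `n + 2` faces.
-/

lemma s_lemma_binary {a b c p q r : ℝ} (ha : 0 < a) (hb : b < 0)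
    (h : ∀ α β : ℝ, α ^ 2 * a + 2 * α * β * c + β ^ 2 * b = 0 →
      0 ≤ α ^ 2 * p + 2 * α * β * r + β ^ 2 * q) :
    p * b ≤ q * a := by
  obtain ⟨s, hs0, hs⟩ : ∃ s, 0 < s ∧ s ^ 2 = c ^ 2 - a * b :=
    ⟨√(c ^ 2 - a * b), Real.sqrt_pos.2 (by nlinarith), Real.sq_sqrt (by nlinarith)⟩
  have hcs := abs_lt.1 (abs_lt_of_sq_lt_sq (by nlinarith) hs0.le : |c| < s)
  -- `(s - c, a)` and `(-s - c, a)` are the two isotropic directions of `(a, c, b)`;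
  -- the weights `c + s` and `s - c` cancel the cross term `r`.
  have hplus := h (s - c) a (by linear_combination a * hs)
  have hminus := h (-s - c) a (by linear_combination a * hs)
  have key : (c + s) * ((s - c) ^ 2 * p + 2 * (s - c) * a * r + a ^ 2 * q)
      + (s - c) * ((-s - c) ^ 2 * p + 2 * (-s - c) * a * r + a ^ 2 * q)
      = 2 * s * a * (q * a - p * b) := by
    linear_combination 2 * s * p * hs
  have : 0 ≤ 2 * s * a * (q * a - p * b) :=
    key ▸ add_nonneg (mul_nonneg (by linarith) hplus) (mul_nonneg (by linarith) hminus)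
  nlinarith [mul_pos hs0 ha]

lemma LinearMap.apply_eq_dotProduct {ι : Type*} [Fintype ι] [DecidableEq ι]
    (f : (ι → ℝ) →ₗ[ℝ] ℝ) (x : ι → ℝ) : f x = (fun i => f (Pi.single i 1)) ⬝ᵥ x := by
  conv_lhs => rw [pi_eq_sum_univ' x]
  simp [dotProduct, mul_comm]

lemma Submodule.exists_strictAnti_forall_mem {K V : Type*} [Field K] [AddCommGroup V]
    [Module K V] [FiniteDimensional K V] {n : ℕ} (hn : Module.finrank K V = n + 1) {v : V}
    (hv : v ≠ 0) : ∃ W : Fin (n + 1) → Submodule K V, StrictAnti W ∧ ∀ k, v ∈ W k := by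
  have hQ : Module.finrank K (V ⧸ K ∙ v) = n := by
    have := (K ∙ v).finrank_quotient_add_finrank
    rw [finrank_span_singleton hv, hn] at this
    omega
  let b := Module.finBasisOfFinrankEq K _ hQ
  refine ⟨fun k => (b.flag k.rev).comap (K ∙ v).mkQ,
    (comap_strictMono_of_surjective (K ∙ v).mkQ_surjective).comp_strictAnti
      (b.flag_strictMono.comp_strictAnti Fin.rev_strictAnti), fun k => ?_⟩
  simp [Submodule.mem_comap,
    (Submodule.Quotient.mk_eq_zero _).2 (Submodule.mem_span_singleton_self v)]

namespace Matrix

variable {ι : Type*} [Fintype ι]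

lemma posSemidef_iff_isSymm_and_nonneg {A : Matrix ι ι ℝ} :
    A.PosSemidef ↔ A.IsSymm ∧ ∀ x, 0 ≤ x ⬝ᵥ A *ᵥ x := by
  simp [posSemidef_iff_dotProduct_mulVec]

lemma IsSymm.dotProduct_mulVec_comm {A : Matrix ι ι ℝ} (hA : A.IsSymm) (x y : ι → ℝ) :
    x ⬝ᵥ A *ᵥ y = y ⬝ᵥ A *ᵥ x := by
  rw [dotProduct_mulVec, ← mulVec_transpose, hA.eq, dotProduct_comm]

lemma IsSymm.dotProduct_mulVec_add_smul {A : Matrix ι ι ℝ} (hA : A.IsSymm) (a b : ℝ)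
    (x y : ι → ℝ) :
    (a • x + b • y) ⬝ᵥ A *ᵥ (a • x + b • y) =
      a ^ 2 * (x ⬝ᵥ A *ᵥ x) + 2 * a * b * (x ⬝ᵥ A *ᵥ y) + b ^ 2 * (y ⬝ᵥ A *ᵥ y) := by
  simp only [mulVec_add, mulVec_smul, dotProduct_add, add_dotProduct, dotProduct_smul,
    smul_dotProduct, smul_eq_mul, hA.dotProduct_mulVec_comm y x]
  ring

lemma dotProduct_mulVec_smul_self (A : Matrix ι ι ℝ) (a : ℝ) (x : ι → ℝ) :
    (a • x) ⬝ᵥ A *ᵥ (a • x) = a ^ 2 * (x ⬝ᵥ A *ᵥ x) := by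
  simp only [mulVec_smul, dotProduct_smul, smul_dotProduct, smul_eq_mul]
  ring

lemma IsSymm.dotProduct_mulVec_add_of_mulVec_eq_zero {A : Matrix ι ι ℝ} (hA : A.IsSymm)
    {k : ι → ℝ} (hk : A *ᵥ k = 0) (x : ι → ℝ) :
    (k + x) ⬝ᵥ A *ᵥ (k + x) = x ⬝ᵥ A *ᵥ x := by
  rw [mulVec_add, hk, zero_add, add_dotProduct, hA.dotProduct_mulVec_comm, hk, dotProduct_zero,
    zero_add]

lemma mul_le_mul_of_isotropic_nonneg {A J : Matrix ι ι ℝ} (hA : A.IsSymm) (hJ : J.IsSymm)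
    (h : ∀ z, z ⬝ᵥ J *ᵥ z = 0 → 0 ≤ z ⬝ᵥ A *ᵥ z) {x y : ι → ℝ}
    (hx : 0 < x ⬝ᵥ J *ᵥ x) (hy : y ⬝ᵥ J *ᵥ y < 0) :
    (x ⬝ᵥ A *ᵥ x) * (y ⬝ᵥ J *ᵥ y) ≤ (y ⬝ᵥ A *ᵥ y) * (x ⬝ᵥ J *ᵥ x) :=
  s_lemma_binary hx hy fun α β hαβ => by
    rw [← hA.dotProduct_mulVec_add_smul]
    exact h _ (by rw [hJ.dotProduct_mulVec_add_smul]; exact hαβ)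

theorem s_lemma {A J : Matrix ι ι ℝ} (hA : A.IsSymm) (hJ : J.IsSymm) {x₀ : ι → ℝ}
    (hx₀ : 0 < x₀ ⬝ᵥ J *ᵥ x₀) (h : ∀ z, 0 ≤ z ⬝ᵥ J *ᵥ z → 0 ≤ z ⬝ᵥ A *ᵥ z) :
    ∃ μ : ℝ, 0 ≤ μ ∧ (A - μ • J).PosSemidef := by
  -- `μ` is the supremum of `qA / qJ` where `qJ < 0` (and `0`); by the two-dimensional case it is
  -- below every value of `qA / qJ` where `qJ > 0`.
  set qA := fun z => z ⬝ᵥ A *ᵥ z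
  set qJ := fun z => z ⬝ᵥ J *ᵥ z
  set R : Set ℝ := insert 0 ((fun y => qA y / qJ y) '' {y | qJ y < 0})
  have hR : ∀ r ∈ R, ∀ x, 0 < qJ x → r ≤ qA x / qJ x := by
    rintro r (rfl | ⟨y, hy, rfl⟩) x hx
    · exact div_nonneg (h x hx.le) hx.le
    · rw [div_le_iff_of_neg hy, div_mul_eq_mul_div, div_le_iff₀ hx]
      exact mul_le_mul_of_isotropic_nonneg hA hJ (fun z hz => h z hz.ge) hx hy
  have hbdd : BddAbove R := ⟨_, fun r hr => hR r hr x₀ hx₀⟩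
  refine ⟨sSup R, le_csSup hbdd (Set.mem_insert 0 _), ?_⟩
  refine posSemidef_iff_isSymm_and_nonneg.2 ⟨hA.sub (hJ.smul _), fun z => ?_⟩
  rw [sub_mulVec, dotProduct_sub, smul_mulVec, dotProduct_smul, smul_eq_mul, sub_nonneg]
  rcases lt_trichotomy (qJ z) 0 with hz | hz | hz
  · exact (div_le_iff_of_neg hz).1 (le_csSup hbdd (Set.mem_insert_of_mem _ ⟨z, hz, rfl⟩))
  · change sSup R * qJ z ≤ qA z
    rw [hz, mul_zero]
    exact h z hz.ge
  · exact (le_div_iff₀ hz).1 (csSup_le ⟨0, Set.mem_insert 0 _⟩ fun r hr => hR r hr z hz)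

namespace PosSemidef

lemma isSymm {A : Matrix ι ι ℝ} (hA : A.PosSemidef) : A.IsSymm :=
  (posSemidef_iff_isSymm_and_nonneg.1 hA).1

lemma dotProduct_mulVec_self_nonneg {A : Matrix ι ι ℝ} (hA : A.PosSemidef) (x : ι → ℝ) :
    0 ≤ x ⬝ᵥ A *ᵥ x :=
  (posSemidef_iff_isSymm_and_nonneg.1 hA).2 x

lemma mulVec_eq_zero_of_dotProduct {A : Matrix ι ι ℝ} (hA : A.PosSemidef) {x : ι → ℝ}
    (hx : x ⬝ᵥ A *ᵥ x = 0) : A *ᵥ x = 0 :=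
  (hA.dotProduct_mulVec_zero_iff x).1 (by simpa using hx)

lemma ker_add {A B : Matrix ι ι ℝ} (hA : A.PosSemidef) (hB : B.PosSemidef) :
    LinearMap.ker (A + B).mulVecLin = LinearMap.ker A.mulVecLin ⊓ LinearMap.ker B.mulVecLin := by
  ext x
  simp only [LinearMap.mem_ker, mulVecLin_apply, Submodule.mem_inf, add_mulVec]
  refine ⟨fun h => ?_, fun ⟨hAx, hBx⟩ => by rw [hAx, hBx, add_zero]⟩
  have hsum : x ⬝ᵥ A *ᵥ x + x ⬝ᵥ B *ᵥ x = 0 := by rw [← dotProduct_add, h, dotProduct_zero]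
  have hAx := hA.dotProduct_mulVec_self_nonneg x
  have hBx := hB.dotProduct_mulVec_self_nonneg x
  exact ⟨hA.mulVec_eq_zero_of_dotProduct (by linarith),
    hB.mulVec_eq_zero_of_dotProduct (by linarith)⟩

lemma exists_smul_sub_posSemidef {A B : Matrix ι ι ℝ} (hA : A.PosSemidef) (hB : B.PosSemidef)
    (hker : LinearMap.ker B.mulVecLin ≤ LinearMap.ker A.mulVecLin) :
    ∃ t : ℝ, 0 ≤ t ∧ (t • B - A).PosSemidef := by
  -- On a complement `W` of `ker B`, `qB` is positive on the unit sphere, so `qA / qB` is bounded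
  -- there; both forms only see the `W`-component of a vector.
  obtain ⟨W, hW⟩ := (LinearMap.ker B.mulVecLin).exists_isCompl
  set S := Metric.sphere (0 : ι → ℝ) 1 ∩ W
  have hpos : ∀ u ∈ S, 0 < u ⬝ᵥ B *ᵥ u := by
    rintro u ⟨hu1, huW⟩
    refine (hB.dotProduct_mulVec_self_nonneg u).lt_of_ne fun h0 => ?_
    have hu0 : u = 0 := Submodule.disjoint_def.1 hW.disjoint u
      (hB.mulVec_eq_zero_of_dotProduct h0.symm) huW
    simp [hu0] at hu1
  have hS : IsCompact S := (isCompact_sphere 0 1).inter_right W.closed_of_finiteDimensional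
  have hcont : ∀ M : Matrix ι ι ℝ, Continuous fun x : ι → ℝ => x ⬝ᵥ M *ᵥ x := fun M => by
    fun_prop
  obtain ⟨t₀, ht₀⟩ := hS.bddAbove_image (f := fun u => (u ⬝ᵥ A *ᵥ u) / (u ⬝ᵥ B *ᵥ u))
    ((hcont A).continuousOn.div (hcont B).continuousOn fun u hu => (hpos u hu).ne')
  set t := max t₀ 0
  have hW_le : ∀ w ∈ W, w ⬝ᵥ A *ᵥ w ≤ t * (w ⬝ᵥ B *ᵥ w) := by
    intro w hw
    rcases eq_or_ne w 0 with rfl | hw0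
    · simp
    have hu : ‖w‖⁻¹ • w ∈ S := ⟨by simp [norm_smul, hw0], W.smul_mem _ hw⟩
    have hle : (‖w‖⁻¹ • w) ⬝ᵥ A *ᵥ (‖w‖⁻¹ • w) ≤ t * ((‖w‖⁻¹ • w) ⬝ᵥ B *ᵥ (‖w‖⁻¹ • w)) :=
      (div_le_iff₀ (hpos _ hu)).1 ((ht₀ ⟨_, hu, rfl⟩).trans (le_max_left _ _))
    rw [dotProduct_mulVec_smul_self, dotProduct_mulVec_smul_self, mul_left_comm] at hle
    exact le_of_mul_le_mul_left hle (by positivity)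
  refine ⟨t, le_max_right _ _, posSemidef_iff_isSymm_and_nonneg.2
    ⟨(hB.isSymm.smul t).sub hA.isSymm, fun x => ?_⟩⟩
  obtain ⟨k, hk, w, hw, rfl⟩ := Submodule.mem_sup.1 (hW.sup_eq_top ▸ Submodule.mem_top (x := x))
  rw [sub_mulVec, dotProduct_sub, smul_mulVec, dotProduct_smul, smul_eq_mul, sub_nonneg,
    hA.isSymm.dotProduct_mulVec_add_of_mulVec_eq_zero (hker hk),
    hB.isSymm.dotProduct_mulVec_add_of_mulVec_eq_zero hk]
  exact hW_le w hw

end PosSemidef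

def psdCommonKer (F : Set (Matrix ι ι ℝ)) : Submodule ℝ (ι → ℝ) :=
  ⨅ A ∈ {A ∈ F | A.PosSemidef}, LinearMap.ker A.mulVecLin

lemma psdCommonKer_antitone : Antitone (psdCommonKer : Set (Matrix ι ι ℝ) → _) :=
  fun _ _ h => le_iInf₂ fun A hA => iInf₂_le A ⟨h hA.1, hA.2⟩

lemma psdCommonKer_le_ker {F : Set (Matrix ι ι ℝ)} {A : Matrix ι ι ℝ} (hAF : A ∈ F)
    (hA : A.PosSemidef) : psdCommonKer F ≤ LinearMap.ker A.mulVecLin :=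
  iInf₂_le A ⟨hAF, hA⟩

lemma exists_ker_eq_psdCommonKer {F : Set (Matrix ι ι ℝ)} (h0 : 0 ∈ F)
    (hadd : ∀ A ∈ F, ∀ B ∈ F, A + B ∈ F) :
    ∃ B ∈ F, B.PosSemidef ∧ LinearMap.ker B.mulVecLin = psdCommonKer F := by
  obtain ⟨B, ⟨hBF, hB⟩, hmin⟩ := (measure fun A : Matrix ι ι ℝ =>
    Module.finrank ℝ (LinearMap.ker A.mulVecLin)).wf.has_min {A ∈ F | A.PosSemidef}
    ⟨0, h0, PosSemidef.zero⟩
  refine ⟨B, hBF, hB, le_antisymm (le_iInf₂ fun A ⟨hAF, hA⟩ => ?_) (psdCommonKer_le_ker hBF hB)⟩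
  have hle : Module.finrank ℝ (LinearMap.ker B.mulVecLin) ≤
      Module.finrank ℝ (LinearMap.ker (B + A).mulVecLin) :=
    not_lt.1 (hmin _ ⟨hadd _ hBF _ hAF, hB.add hA⟩)
  rw [hB.ker_add hA] at hle
  exact (Submodule.eq_of_le_of_finrank_le inf_le_left hle).ge.trans inf_le_right

end Matrix

namespace IsFaceOf

variable {M : Type*} [AddCommMonoid M] [Module ℝ M] {C F : Set M}

lemma of_cone (h0 : (0 : M) ∈ F) (hFC : F ⊆ C)
    (hadd : ∀ a ∈ F, ∀ b ∈ F, a + b ∈ F) (hsmul : ∀ a ∈ F, ∀ c : ℝ, 0 ≤ c → c • a ∈ F)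
    (hext : ∀ a ∈ C, ∀ b ∈ C, a + b ∈ F → a ∈ F ∧ b ∈ F) : IsFaceOf C F :=
  ⟨⟨0, h0⟩, hFC, fun _ ha _ hb _ _ hα hβ _ => hadd _ (hsmul _ ha _ hα) _ (hsmul _ hb _ hβ),
    hsmul, hext⟩

lemma smul_mem (hF : IsFaceOf C F) {a : M} (ha : a ∈ F) {c : ℝ} (hc : 0 ≤ c) : c • a ∈ F :=
  hF.2.2.2.1 a ha c hc

lemma zero_mem (hF : IsFaceOf C F) : (0 : M) ∈ F := by
  obtain ⟨a, ha⟩ := hF.1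
  simpa using hF.smul_mem ha le_rfl

lemma add_mem (hF : IsFaceOf C F) {a b : M} (ha : a ∈ F) (hb : b ∈ F) : a + b ∈ F := by
  have hmid := hF.2.2.1 ha hb (by norm_num : (0 : ℝ) ≤ 2⁻¹) (by norm_num : (0 : ℝ) ≤ 2⁻¹)
    (by norm_num)
  simpa [← smul_add, smul_smul] using hF.smul_mem hmid (by norm_num : (0 : ℝ) ≤ 2)

lemma mem_of_add_mem (hF : IsFaceOf C F) {a b : M} (ha : a ∈ C) (hb : b ∈ C)
    (hab : a + b ∈ F) : a ∈ F ∧ b ∈ F :=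
  hF.2.2.2.2 a ha b hb hab

lemma mem_of_psdCommonKer_le {ι : Type*} [Fintype ι] {C F : Set (Matrix ι ι ℝ)}
    (hC : ∀ P : Matrix ι ι ℝ, P.PosSemidef → P ∈ C) (hF : IsFaceOf C F) {P : Matrix ι ι ℝ}
    (hP : P.PosSemidef) (hker : psdCommonKer F ≤ LinearMap.ker P.mulVecLin) : P ∈ F := by
  obtain ⟨B, hBF, hB, hBker⟩ := exists_ker_eq_psdCommonKer hF.zero_mem fun _ ha _ hb =>
    hF.add_mem ha hb
  obtain ⟨t, ht, htB⟩ := hP.exists_smul_sub_posSemidef hB (hBker ▸ hker)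
  refine (hF.mem_of_add_mem (hC P hP) (hC _ htB) ?_).1
  rw [add_sub_cancel]
  exact hF.smul_mem hBF ht

end IsFaceOf

section COPset

variable {n : ℕ} {K : Set (Fin n → ℝ)}

lemma mem_COPset_of_posSemidef {P : Matrix (Fin n) (Fin n) ℝ} (hP : P.PosSemidef) :
    P ∈ COPset K :=
  ⟨hP.isSymm, fun x _ => hP.dotProduct_mulVec_self_nonneg x⟩

lemma COPset_add_mem {A B : Matrix (Fin n) (Fin n) ℝ} (hA : A ∈ COPset K) (hB : B ∈ COPset K) :
    A + B ∈ COPset K :=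
  ⟨hA.1.add hB.1, fun x hx => by
    rw [add_mulVec, dotProduct_add]; exact add_nonneg (hA.2 x hx) (hB.2 x hx)⟩

lemma COPset_smul_mem {A : Matrix (Fin n) (Fin n) ℝ} (hA : A ∈ COPset K) {c : ℝ} (hc : 0 ≤ c) :
    c • A ∈ COPset K :=
  ⟨hA.1.smul c, fun x hx => by
    rw [smul_mulVec, dotProduct_smul, smul_eq_mul]; exact mul_nonneg hc (hA.2 x hx)⟩

lemma isFaceOf_COPset_self : IsFaceOf (COPset K) (COPset K) :=
  .of_cone (mem_COPset_of_posSemidef PosSemidef.zero) subset_rfl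
    (fun _ ha _ hb => COPset_add_mem ha hb) (fun _ ha _ hc => COPset_smul_mem ha hc)
    fun _ ha _ hb _ => ⟨ha, hb⟩

end COPset

section SecondOrderCone

variable {m : ℕ}

lemma Jmat_isSymm : (Jmat m).IsSymm := isSymm_diagonal _

lemma Jmat_mulVec (x : Fin (m + 1) → ℝ) :
    Jmat m *ᵥ x = fun i => if i = 0 then x i else -x i := by
  ext i
  split_ifs with h <;> simp [Jmat, mulVec_diagonal, h]

lemma dotProduct_Jmat_mulVec (x : Fin (m + 1) → ℝ) :
    x ⬝ᵥ Jmat m *ᵥ x = x 0 ^ 2 - ∑ i : Fin m, x i.succ ^ 2 := by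
  simp [Jmat_mulVec, dotProduct, Fin.sum_univ_succ, Fin.succ_ne_zero, sq, sub_eq_add_neg]

lemma dotProduct_Jmat_mulVec_single_zero :
    Pi.single 0 1 ⬝ᵥ Jmat m *ᵥ Pi.single 0 1 = 1 := by
  rw [dotProduct_Jmat_mulVec]
  simp [Fin.succ_ne_zero]

lemma Jmat_mulVec_ne_zero {v : Fin (m + 1) → ℝ} (hv : v ≠ 0) : Jmat m *ᵥ v ≠ 0 := by
  refine fun h => hv (funext fun i => ?_)
  have := congrFun h i
  by_cases hi : i = 0 <;> simpa [Jmat_mulVec, hi] using this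

lemma exists_isotropic_ne_zero (hm : 1 ≤ m) :
    ∃ v : Fin (m + 1) → ℝ, v ≠ 0 ∧ v ⬝ᵥ Jmat m *ᵥ v = 0 := by
  obtain ⟨i⟩ : Nonempty (Fin m) := ⟨⟨0, hm⟩⟩
  refine ⟨Pi.single 0 1 + Pi.single i.succ 1, fun h => by
    simpa [Fin.succ_ne_zero] using congrFun h 0, ?_⟩
  rw [dotProduct_Jmat_mulVec]
  simp [Fin.succ_ne_zero, Pi.single_apply]

lemma mem_soc_iff {x : Fin (m + 1) → ℝ} :
    x ∈ soc m ↔ 0 ≤ x 0 ∧ ∑ i : Fin m, x i.succ ^ 2 ≤ x 0 ^ 2 :=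
  Real.sqrt_le_iff

lemma dotProduct_Jmat_mulVec_nonneg {x : Fin (m + 1) → ℝ} (hx : x ∈ soc m) :
    0 ≤ x ⬝ᵥ Jmat m *ᵥ x := by
  rw [dotProduct_Jmat_mulVec, sub_nonneg]
  exact (mem_soc_iff.1 hx).2

lemma mem_soc_or_neg_mem_soc {x : Fin (m + 1) → ℝ} (hx : 0 ≤ x ⬝ᵥ Jmat m *ᵥ x) :
    x ∈ soc m ∨ -x ∈ soc m := by
  rw [dotProduct_Jmat_mulVec, sub_nonneg] at hx
  simp only [mem_soc_iff, Pi.neg_apply, neg_sq, neg_nonneg]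
  exact (le_total 0 (x 0)).imp (⟨·, hx⟩) (⟨·, hx⟩)

lemma Jmat_mem_COPset : Jmat m ∈ COPset (soc m) :=
  ⟨Jmat_isSymm, fun _ => dotProduct_Jmat_mulVec_nonneg⟩

lemma mem_COPset_soc_iff {A : Matrix (Fin (m + 1)) (Fin (m + 1)) ℝ} :
    A ∈ COPset (soc m) ↔ ∃ P : Matrix (Fin (m + 1)) (Fin (m + 1)) ℝ, P.PosSemidef ∧
      ∃ μ : ℝ, 0 ≤ μ ∧ A = P + μ • Jmat m := by
  refine ⟨fun hA => ?_, ?_⟩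
  · obtain ⟨μ, hμ, hP⟩ := s_lemma hA.1 Jmat_isSymm
      (dotProduct_Jmat_mulVec_single_zero.symm ▸ one_pos) fun z hz =>
      (mem_soc_or_neg_mem_soc hz).elim (hA.2 z) fun h => by simpa [mulVec_neg] using hA.2 _ h
    exact ⟨_, hP, μ, hμ, (sub_add_cancel _ _).symm⟩
  · rintro ⟨P, hP, μ, hμ, rfl⟩
    exact COPset_add_mem (mem_COPset_of_posSemidef hP) (COPset_smul_mem Jmat_mem_COPset hμ)

open scoped MatrixOrder in
lemma isFaceOf_COPset_soc_zero : IsFaceOf (COPset (soc m)) {0} := by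
  refine .of_cone rfl (by simpa using mem_COPset_of_posSemidef PosSemidef.zero)
    (by simp) (by simp) fun A hA B hB hAB => ?_
  obtain ⟨P, hP, μ, hμ, rfl⟩ := mem_COPset_soc_iff.1 hA
  obtain ⟨Q, hQ, ν, hν, rfl⟩ := mem_COPset_soc_iff.1 hB
  have hsum : P + Q + (μ + ν) • Jmat m = 0 := by
    rw [← Set.mem_singleton_iff.1 hAB]; module
  have he := congrArg (fun M => Pi.single 0 1 ⬝ᵥ M *ᵥ Pi.single 0 1) hsum
  simp only [add_mulVec, smul_mulVec, dotProduct_add, dotProduct_smul, smul_eq_mul,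
    dotProduct_Jmat_mulVec_single_zero, mul_one, zero_mulVec, dotProduct_zero] at he
  have hμν : μ = 0 ∧ ν = 0 := by
    have := hP.dotProduct_mulVec_self_nonneg (Pi.single 0 1)
    have := hQ.dotProduct_mulVec_self_nonneg (Pi.single 0 1)
    constructor <;> linarith
  obtain ⟨rfl, rfl⟩ := hμν
  obtain ⟨rfl, rfl⟩ := (add_eq_zero_iff_of_nonneg hP.nonneg hQ.nonneg).1 (by simpa using hsum)
  simp

lemma IsFaceOf.subset_of_psdCommonKer_le {F F' : Set (Matrix (Fin (m + 1)) (Fin (m + 1)) ℝ)}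
    (hF : IsFaceOf (COPset (soc m)) F) (hF' : IsFaceOf (COPset (soc m)) F')
    (hker : psdCommonKer F ≤ psdCommonKer F') (hJ : Jmat m ∈ F' → Jmat m ∈ F) : F' ⊆ F := by
  intro A hA
  obtain ⟨P, hP, μ, hμ, rfl⟩ := mem_COPset_soc_iff.1 (hF'.2.1 hA)
  obtain ⟨hPF', hμJ⟩ := hF'.mem_of_add_mem (mem_COPset_of_posSemidef hP)
    (COPset_smul_mem Jmat_mem_COPset hμ) hA
  refine hF.add_mem (hF.mem_of_psdCommonKer_le (fun _ => mem_COPset_of_posSemidef) hP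
    (hker.trans (psdCommonKer_le_ker hPF' hP))) ?_
  rcases hμ.eq_or_lt with rfl | hμ
  · simpa using hF.zero_mem
  · refine hF.smul_mem (hJ ?_) hμ.le
    simpa [smul_smul, hμ.ne'] using hF'.smul_mem hμJ (inv_nonneg.2 hμ.le)

open Classical in
noncomputable def copFaceHeight (F : Set (Matrix (Fin (m + 1)) (Fin (m + 1)) ℝ)) : ℕ :=
  (m + 1 - Module.finrank ℝ (psdCommonKer F)) + if Jmat m ∈ F then 1 else 0

lemma copFaceHeight_le (F : Set (Matrix (Fin (m + 1)) (Fin (m + 1)) ℝ)) :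
    copFaceHeight F ≤ m + 2 := by
  unfold copFaceHeight
  split_ifs <;> omega

lemma copFaceHeight_lt_of_ssubset {F F' : Set (Matrix (Fin (m + 1)) (Fin (m + 1)) ℝ)}
    (hF : IsFaceOf (COPset (soc m)) F) (hF' : IsFaceOf (COPset (soc m)) F') (h : F ⊂ F') :
    copFaceHeight F < copFaceHeight F' := by
  have hker := psdCommonKer_antitone h.subset
  have hdim : Module.finrank ℝ (psdCommonKer F) ≤ m + 1 :=
    (Submodule.finrank_le _).trans (Module.finrank_fin_fun ℝ).le
  have hJ : Jmat m ∈ F → Jmat m ∈ F' := fun hJ => h.subset hJ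
  unfold copFaceHeight
  rcases hker.eq_or_lt with heq | hlt
  · have : ¬ (Jmat m ∈ F' → Jmat m ∈ F) := fun hJ' =>
      h.not_subset (hF.subset_of_psdCommonKer_le hF' heq.ge hJ')
    rw [heq]
    split_ifs <;> tauto
  · have := Submodule.finrank_lt_finrank_of_lt hlt
    split_ifs with hJF hJF' <;> first | omega | exact absurd (hJ hJF) hJF'

theorem le_of_strictMono_isFaceOf_COPset_soc {l : ℕ}
    {F : Fin l → Set (Matrix (Fin (m + 1)) (Fin (m + 1)) ℝ)} (hF : StrictMono F)
    (hface : ∀ i, IsFaceOf (COPset (soc m)) (F i)) : l ≤ m + 3 :=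
  Fin.le_of_injective (fun i => ⟨copFaceHeight (F i), Nat.lt_succ_of_le (copFaceHeight_le _)⟩)
    fun _ _ hij => (StrictMono.injective fun _ _ hab =>
      copFaceHeight_lt_of_ssubset (hface _) (hface _) (hF hab)) (Fin.val_eq_of_eq hij)

def kerFace (m : ℕ) (U : Submodule ℝ (Fin (m + 1) → ℝ)) :
    Set (Matrix (Fin (m + 1)) (Fin (m + 1)) ℝ) :=
  {A | ∃ S : Matrix (Fin (m + 1)) (Fin (m + 1)) ℝ, S.PosSemidef ∧
    U ≤ LinearMap.ker S.mulVecLin ∧ ∃ t : ℝ, 0 ≤ t ∧ A = S + t • Jmat m}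

lemma kerFace_antitone : Antitone (kerFace m) := by
  rintro U' U h A ⟨S, hS, hU, t, ht, rfl⟩
  exact ⟨S, hS, h.trans hU, t, ht, rfl⟩

lemma zero_mem_kerFace (U : Submodule ℝ (Fin (m + 1) → ℝ)) : 0 ∈ kerFace m U :=
  ⟨0, PosSemidef.zero, fun u _ => by simp, 0, le_rfl, by simp⟩

lemma Jmat_mem_kerFace (U : Submodule ℝ (Fin (m + 1) → ℝ)) : Jmat m ∈ kerFace m U :=
  ⟨0, PosSemidef.zero, fun u _ => by simp, 1, zero_le_one, by simp⟩

lemma kerFace_subset_COPset (U : Submodule ℝ (Fin (m + 1) → ℝ)) :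
    kerFace m U ⊆ COPset (soc m) := by
  rintro A ⟨S, hS, -, t, ht, rfl⟩
  exact mem_COPset_soc_iff.2 ⟨S, hS, t, ht, rfl⟩

lemma isFaceOf_kerFace {U : Submodule ℝ (Fin (m + 1) → ℝ)} {v : Fin (m + 1) → ℝ} (hvU : v ∈ U)
    (hv : v ⬝ᵥ Jmat m *ᵥ v = 0) (hJv : Jmat m *ᵥ v ≠ 0) :
    IsFaceOf (COPset (soc m)) (kerFace m U) := by
  refine .of_cone (zero_mem_kerFace U) (kerFace_subset_COPset U) ?_ ?_ ?_
  · rintro _ ⟨S, hS, hSU, t, ht, rfl⟩ _ ⟨S', hS', hSU', t', ht', rfl⟩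
    refine ⟨S + S', hS.add hS', (le_inf hSU hSU').trans (hS.ker_add hS').ge, t + t',
      add_nonneg ht ht', by rw [add_smul]; abel⟩
  · rintro _ ⟨S, hS, hSU, t, ht, rfl⟩ c hc
    refine ⟨c • S, hS.smul hc, fun u hu => ?_, c * t, mul_nonneg hc ht, by
      rw [smul_add, smul_smul]⟩
    simp [(LinearMap.mem_ker.1 (hSU hu) : S *ᵥ u = 0)]
  · intro A hA B hB ⟨S, hS, hSU, t, ht, hAB⟩
    obtain ⟨P, hP, μ, hμ, rfl⟩ := mem_COPset_soc_iff.1 hA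
    obtain ⟨Q, hQ, ν, hν, rfl⟩ := mem_COPset_soc_iff.1 hB
    have hPQ : P + Q = S + (t - μ - ν) • Jmat m := by
      linear_combination (norm := module) hAB
    have hSv : S *ᵥ v = 0 := hSU hvU
    -- `v` is isotropic and killed by `S`, so the PSD matrix `P + Q` kills it too,
    -- which forces the coefficient of `J` to vanish.
    have hPQv : (P + Q) *ᵥ v = 0 := (hP.add hQ).mulVec_eq_zero_of_dotProduct (by
      rw [hPQ, add_mulVec, smul_mulVec, hSv, zero_add, dotProduct_smul, hv, smul_zero])
    rw [hPQ, add_mulVec, hSv, zero_add, smul_mulVec, smul_eq_zero] at hPQv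
    have hPQS : P + Q = S := by
      rw [hPQ, hPQv.resolve_right hJv, zero_smul, add_zero]
    have hker := hSU.trans (hPQS ▸ hP.ker_add hQ).le
    exact ⟨⟨P, hP, hker.trans inf_le_left, μ, hμ, rfl⟩,
      ⟨Q, hQ, hker.trans inf_le_right, ν, hν, rfl⟩⟩

lemma kerFace_ssubset_kerFace {U U' : Submodule ℝ (Fin (m + 1) → ℝ)} {v : Fin (m + 1) → ℝ}
    (hvU' : v ∈ U') (hJv : Jmat m *ᵥ v ≠ 0) (h : U' < U) : kerFace m U ⊂ kerFace m U' := by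
  refine (kerFace_antitone h.le).ssubset_of_not_subset fun hsub => ?_
  obtain ⟨u, huU, huU'⟩ := SetLike.exists_of_lt h
  obtain ⟨f, hfu, hf⟩ := Submodule.exists_le_ker_of_notMem huU'
  -- The witness is `w wᵀ`, where `f = ⟨w, ·⟩` vanishes on `U'` but not at `u ∈ U`.
  set w : Fin (m + 1) → ℝ := fun i => f (Pi.single i 1)
  have hSx : ∀ x, vecMulVec w w *ᵥ x = f x • w := fun x => by
    simp [vecMulVec_mulVec, LinearMap.apply_eq_dotProduct f x, w]
  have hSU' : vecMulVec w w ∈ kerFace m U' :=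
    ⟨vecMulVec w w, by simpa using posSemidef_vecMulVec_self_star w,
      fun x hx => by simp [hSx, LinearMap.mem_ker.1 (hf hx)], 0, le_rfl, by simp⟩
  obtain ⟨S, -, hSU, t, -, hS⟩ := hsub hSU'
  have hSv : S *ᵥ v = 0 := hSU (h.le hvU')
  have hv := congrArg (· *ᵥ v) hS
  simp only [hSx, LinearMap.mem_ker.1 (hf hvU'), zero_smul, add_mulVec, hSv, zero_add,
    smul_mulVec] at hv
  have ht : t = 0 := (smul_eq_zero.1 hv.symm).resolve_right hJv
  have hSu : S *ᵥ u = 0 := hSU huU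
  have hu := congrArg (· *ᵥ u) hS
  simp only [hSx, ht, zero_smul, add_zero, hSu, smul_eq_zero] at hu
  exact hfu (hu.resolve_right fun hw => by simp [LinearMap.apply_eq_dotProduct f u, w, hw] at hfu)

lemma kerFace_ssubset_COPset {U : Submodule ℝ (Fin (m + 1) → ℝ)} {v : Fin (m + 1) → ℝ}
    (hvU : v ∈ U) (hv0 : v ≠ 0) (hv : v ⬝ᵥ Jmat m *ᵥ v = 0) :
    kerFace m U ⊂ COPset (soc m) := by
  refine (kerFace_subset_COPset U).ssubset_of_not_subset fun hsub => hv0 ?_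
  obtain ⟨S, -, hSU, t, -, h1⟩ := hsub (mem_COPset_of_posSemidef PosSemidef.one)
  have hSv : S *ᵥ v = 0 := hSU hvU
  have hv' := congrArg (v ⬝ᵥ · *ᵥ v) h1
  simp only [one_mulVec, add_mulVec, hSv, zero_add, smul_mulVec, dotProduct_smul, hv,
    smul_zero] at hv'
  exact dotProduct_self_eq_zero.1 hv'

lemma singleton_zero_ssubset_kerFace (U : Submodule ℝ (Fin (m + 1) → ℝ)) :
    {0} ⊂ kerFace m U := by
  refine Set.ssubset_iff_exists.2 ⟨Set.singleton_subset_iff.2 (zero_mem_kerFace U), Jmat m,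
    Jmat_mem_kerFace U, fun h => ?_⟩
  simpa [Jmat] using congrFun (congrFun (Set.mem_singleton_iff.1 h) 0) 0

theorem exists_strictMono_isFaceOf_COPset_soc (hm : 1 ≤ m) :
    ∃ F : Fin (m + 3) → Set (Matrix (Fin (m + 1)) (Fin (m + 1)) ℝ),
      StrictMono F ∧ ∀ i, IsFaceOf (COPset (soc m)) (F i) := by
  obtain ⟨v, hv0, hv⟩ := exists_isotropic_ne_zero hm
  obtain ⟨W, hW, hvW⟩ := Submodule.exists_strictAnti_forall_mem (Module.finrank_fin_fun ℝ) hv0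
  set G := fun k => kerFace m (W k)
  have hG : StrictMono (Fin.snoc G (COPset (soc m))) := by
    rw [← Fin.insertNth_last', Fin.strictMono_insertNth_iff]
    exact ⟨fun _ _ hkl => kerFace_ssubset_kerFace (hvW _) (Jmat_mulVec_ne_zero hv0) (hW hkl),
      fun k _ => kerFace_ssubset_COPset (hvW k) hv0 hv,
      fun k hk => absurd hk (Fin.castSucc_lt_last k).not_ge⟩
  refine ⟨Fin.cons {0} (Fin.snoc G (COPset (soc m))), Fin.strictMono_cons.2 ⟨fun j => ?_, hG⟩,
    Fin.cases isFaceOf_COPset_soc_zero (Fin.lastCases ?_ fun k => ?_)⟩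
  · refine Fin.lastCases ?_ (fun k => ?_) j
    · simpa using (singleton_zero_ssubset_kerFace (W 0)).trans
        (kerFace_ssubset_COPset (hvW 0) hv0 hv)
    · simpa using singleton_zero_ssubset_kerFace (W k)
  · simpa using isFaceOf_COPset_self
  · simpa using isFaceOf_kerFace (hvW k) hv (Jmat_mulVec_ne_zero hv0)

end SecondOrderCone

/-- the length of a longest chain of faces of `COP(Lⁿ)` is `n + 2`
(here `n = m + 1 ≥ 2`, so `n + 2 = m + 3`). -/
theorem stmt8 (m : ℕ) (hm : 1 ≤ m) :
    (∃ F : Fin (m + 3) → Set (Matrix (Fin (m+1)) (Fin (m+1)) ℝ),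
        StrictMono F ∧ ∀ i, IsFaceOf (COPset (soc m)) (F i)) ∧
    (∀ (l : ℕ) (F : Fin l → Set (Matrix (Fin (m+1)) (Fin (m+1)) ℝ)),
        StrictMono F → (∀ i, IsFaceOf (COPset (soc m)) (F i)) → l ≤ m + 3) := by
  exact ⟨exists_strictMono_isFaceOf_COPset_soc hm, fun _ _ hF hface =>
    le_of_strictMono_isFaceOf_COPset_soc hF hface⟩
end

section
/- Let n ≥ 2 and let X be a d-dimensional linear subspace of ℝⁿ with X ∩ int Lⁿ ≠ ∅. Then the dimension of the cone CP(X ∩ Lⁿ) (i.e., the dimension of its linear span in Sⁿ) equals T_d = d(d+1)/2. -/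
/-!
The span of `CP(X ∩ Lⁿ)` is the span of the rank-one matrices `aaᵀ` with `a ∈ X ∩ Lⁿ`. Since `X`
meets the open set `int Lⁿ` at some `e`, every `a ∈ X` gives `e ± t a ∈ X ∩ int Lⁿ` for a small
`t ≠ 0`, and the polarization identity
`(e + ta)(e + ta)ᵀ + (e - ta)(e - ta)ᵀ = 2eeᵀ + 2t²aaᵀ` puts `aaᵀ` in that span. So the span is
`{aaᵀ : a ∈ X}`, which is `B Sym(d) Bᵀ` for a matrix `B` whose columns form a basis of `X`; as `B`
has a left inverse, this space is isomorphic to `Sym(d)`, of dimension `d(d+1)/2`.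
-/

open Matrix
open scoped Pointwise

open Module Set Submodule Filter Topology

theorem exists_ne_zero_add_smul_mem_and_sub_smul_mem {E : Type*} [AddCommGroup E] [Module ℝ E]
    [TopologicalSpace E] [IsTopologicalAddGroup E] [ContinuousSMul ℝ E] {U : Set E} (hU : IsOpen U)
    {e : E} (he : e ∈ U) (a : E) : ∃ t : ℝ, t ≠ 0 ∧ e + t • a ∈ U ∧ e - t • a ∈ U := by
  have hplus : ∀ᶠ t : ℝ in 𝓝 0, e + t • a ∈ U :=
    (Continuous.continuousAt (by fun_prop)).preimage_mem_nhds (by simpa using hU.mem_nhds he)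
  have hminus : ∀ᶠ t : ℝ in 𝓝 0, e - t • a ∈ U :=
    (Continuous.continuousAt (by fun_prop)).preimage_mem_nhds (by simpa using hU.mem_nhds he)
  obtain ⟨t, ⟨h₁, h₂⟩, ht⟩ :=
    (((hplus.and hminus).filter_mono nhdsWithin_le_nhds).and self_mem_nhdsWithin).exists
      (f := 𝓝[≠] 0)
  exact ⟨t, ht, h₁, h₂⟩

namespace Matrix

section SymmetricMatrices

variable (ι R : Type*) [Semiring R]

def symmetricMatrices : Submodule R (Matrix ι ι R) where
  carrier := {A | A.IsSymm}
  add_mem' := IsSymm.add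
  zero_mem' := isSymm_zero
  smul_mem' c _ h := h.smul c

def symmetricMatricesEquivSym2 : symmetricMatrices ι R ≃ₗ[R] (Sym2 ι → R) where
  toFun A := Sym2.lift ⟨fun i j => A.1 i j, fun i j => A.2.apply j i⟩
  invFun f := ⟨of fun i j => f s(i, j), IsSymm.ext fun i j => by simp [Sym2.eq_swap]⟩
  map_add' A B := by ext z; induction z using Sym2.ind; rfl
  map_smul' c A := by ext z; induction z using Sym2.ind; rfl
  left_inv A := by ext; simp
  right_inv f := by ext z; induction z using Sym2.ind; simp

theorem finrank_symmetricMatrices [Fintype ι] [StrongRankCondition R] :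
    finrank R (symmetricMatrices ι R) = Fintype.card ι * (Fintype.card ι + 1) / 2 := by
  rw [(symmetricMatricesEquivSym2 ι R).finrank_eq, finrank_fintype_fun_eq_card, Sym2.card,
    Nat.choose_two_right, Nat.add_sub_cancel, Nat.mul_comm]

end SymmetricMatrices

theorem vecMulVec_add_vecMulVec_mem_span_range_vecMulVec_self {ι R : Type*} [Ring R]
    (u v : ι → R) :
    vecMulVec u v + vecMulVec v u ∈ span R (range fun a : ι → R => vecMulVec a a) := by
  have h : vecMulVec u v + vecMulVec v u =
      vecMulVec (u + v) (u + v) - vecMulVec u u - vecMulVec v v := by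
    simp only [add_vecMulVec, vecMulVec_add]
    abel
  rw [h]
  exact sub_mem (sub_mem (subset_span ⟨_, rfl⟩) (subset_span ⟨_, rfl⟩)) (subset_span ⟨_, rfl⟩)

theorem span_range_vecMulVec_self {ι K : Type*} [Fintype ι] [Field K] [NeZero (2 : K)] :
    span K (range fun a : ι → K => vecMulVec a a) = symmetricMatrices ι K := by
  classical
  refine le_antisymm (span_le.mpr ?_) fun S hS => ?_
  · rintro _ ⟨a, rfl⟩
    exact transpose_vecMulVec a a
  · have hS2 : (2 : K) • S = ∑ i, ∑ j, S i j •
          (vecMulVec (Pi.single i 1) (Pi.single j 1) +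
            vecMulVec (Pi.single j 1) (Pi.single i 1)) := by
      ext k l
      simp [Matrix.sum_apply, vecMulVec_apply, Pi.single_apply, Finset.sum_add_distrib,
        IsSymm.apply hS k l, two_mul]
    refine (smul_mem_iff _ (two_ne_zero : (2 : K) ≠ 0)).mp ?_
    rw [hS2]
    exact sum_mem fun i _ => sum_mem fun j _ =>
      smul_mem _ _ (vecMulVec_add_vecMulVec_mem_span_range_vecMulVec_self _ _)

theorem finrank_span_vecMulVec_self_image_range {ι κ K : Type*} [Fintype ι] [Fintype κ]
    [Field K] [NeZero (2 : K)] (f : (κ → K) →ₗ[K] (ι → K)) (hf : Function.Injective f) :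
    finrank K (span K ((fun a => vecMulVec a a) '' range f)) =
      Fintype.card κ * (Fintype.card κ + 1) / 2 := by
  classical
  obtain ⟨g, hg⟩ := f.exists_leftInverse_of_injective (LinearMap.ker_eq_bot.mpr hf)
  set B := LinearMap.toMatrix' f
  set C := LinearMap.toMatrix' g
  have hCB : C * B = 1 := by rw [← LinearMap.toMatrix'_comp, hg, LinearMap.toMatrix'_id]
  let congrB := mulRightLinearMap ι K Bᵀ ∘ₗ mulLeftLinearMap κ K B
  have hcongrB : Function.Injective congrB := fun M N h => by
    simpa [congrB, Matrix.mul_assoc, hCB, ← transpose_mul, ← Matrix.mul_assoc C B]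
      using congr(C * $h * Cᵀ)
  have himage : (fun a => vecMulVec a a) '' range f =
      congrB '' range fun v : κ → K => vecMulVec v v := by
    rw [← range_comp, ← range_comp]
    congr 1
    funext v
    simp [congrB, B, mul_vecMulVec, vecMulVec_mul, vecMul_transpose]
  rw [himage, span_image, span_range_vecMulVec_self,
    ← (equivMapOfInjective congrB hcongrB _).finrank_eq, finrank_symmetricMatrices]

theorem finrank_span_vecMulVec_self_image {ι K : Type*} [Fintype ι] [Field K] [NeZero (2 : K)]
    (X : Submodule K (ι → K)) :
    finrank K (span K ((fun a => vecMulVec a a) '' (X : Set (ι → K)))) =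
      finrank K X * (finrank K X + 1) / 2 := by
  let f := X.subtype ∘ₗ (Module.finBasis K X).equivFun.symm.toLinearMap
  have hrange : range f = X := by simp [f]
  rw [← hrange, finrank_span_vecMulVec_self_image_range f
    (X.injective_subtype.comp (Module.finBasis K X).equivFun.symm.injective), Fintype.card_fin]

theorem vecMulVec_add_smul_self_add_vecMulVec_sub_smul_self {ι R : Type*} [CommRing R]
    (e a : ι → R) (t : R) :
    vecMulVec (e + t • a) (e + t • a) + vecMulVec (e - t • a) (e - t • a) =
      2 • vecMulVec e e + (2 * t ^ 2) • vecMulVec a a := by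
  ext i j
  simp only [add_apply, smul_apply, vecMulVec_apply, Pi.add_apply, Pi.sub_apply, Pi.smul_apply,
    smul_eq_mul, nsmul_eq_mul]
  ring

theorem span_vecMulVec_self_image_inter_isOpen {ι : Type*} (X : Submodule ℝ (ι → ℝ))
    {U : Set (ι → ℝ)} (hU : IsOpen U) (hXU : ((X : Set (ι → ℝ)) ∩ U).Nonempty) :
    span ℝ ((fun a => vecMulVec a a) '' (X ∩ U)) = span ℝ ((fun a => vecMulVec a a) '' X) := by
  refine le_antisymm (span_mono (image_mono inter_subset_left)) (span_le.mpr ?_)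
  rintro _ ⟨a, ha, rfl⟩
  obtain ⟨e, heX, heU⟩ := hXU
  obtain ⟨t, ht, hplus, hminus⟩ := exists_ne_zero_add_smul_mem_and_sub_smul_mem hU heU a
  have hsq : ∀ x ∈ X, x ∈ U → vecMulVec x x ∈ span ℝ ((fun a => vecMulVec a a) '' (X ∩ U)) :=
    fun x hx hxU => subset_span ⟨x, ⟨hx, hxU⟩, rfl⟩
  have hpolar := vecMulVec_add_smul_self_add_vecMulVec_sub_smul_self e a t
  refine (smul_mem_iff _ (by positivity : 2 * t ^ 2 ≠ 0)).mp ?_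
  rw [eq_sub_of_add_eq' hpolar.symm]
  exact sub_mem (add_mem (hsq _ (add_mem heX (smul_mem _ t ha)) hplus)
    (hsq _ (sub_mem heX (smul_mem _ t ha)) hminus)) (nsmul_mem (hsq e heX heU) 2)

end Matrix

theorem span_CPset {n : ℕ} (S : Set (Fin n → ℝ)) :
    span ℝ (CPset S) = span ℝ ((fun a => vecMulVec a a) '' S) := by
  refine le_antisymm (span_le.mpr ?_) (span_mono ?_)
  · rintro _ ⟨k, -, f, hf, rfl⟩
    exact sum_mem fun i _ => subset_span ⟨f i, hf i, rfl⟩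
  · rintro _ ⟨a, ha, rfl⟩
    exact ⟨1, one_pos, fun _ => a, fun _ => ha, by simp⟩

theorem isOpen_socInt (m : ℕ) : IsOpen (socInt m) :=
  isOpen_lt (by fun_prop) (continuous_apply 0)

theorem socInt_subset_soc (m : ℕ) : socInt m ⊆ soc m :=
  fun _ hx => le_of_lt (α := ℝ) hx

theorem stmt11_general (m : ℕ) (d : ℕ) (X : Submodule ℝ (Fin (m+1) → ℝ))
    (hd : Module.finrank ℝ X = d)
    (hint : ((X : Set (Fin (m+1) → ℝ)) ∩ socInt m).Nonempty) :
    setDim (CPset ((X : Set (Fin (m+1) → ℝ)) ∩ soc m)) = d * (d + 1) / 2 := by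
  have hspan : span ℝ ((fun a => vecMulVec a a) '' ((X : Set (Fin (m+1) → ℝ)) ∩ soc m)) =
      span ℝ ((fun a => vecMulVec a a) '' X) :=
    le_antisymm (span_mono (image_mono inter_subset_left)) <|
      (span_vecMulVec_self_image_inter_isOpen X (isOpen_socInt m) hint).ge.trans <|
        span_mono (image_mono (inter_subset_inter_right _ (socInt_subset_soc m)))
  rw [setDim, span_CPset, hspan, finrank_span_vecMulVec_self_image, hd]

/-- if a `d`-dimensional subspace `X` meets `int Lⁿ`, then
`dim CP(X ∩ Lⁿ) = d(d+1)/2` (here `n = m + 1 ≥ 2`). -/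
theorem stmt11 (m : ℕ) (hm : 1 ≤ m) (d : ℕ) (X : Submodule ℝ (Fin (m+1) → ℝ))
    (hd : Module.finrank ℝ X = d)
    (hint : ((X : Set (Fin (m+1) → ℝ)) ∩ socInt m).Nonempty) :
    setDim (CPset ((X : Set (Fin (m+1) → ℝ)) ∩ soc m)) = d * (d + 1) / 2 :=
  stmt11_general m d X hd hint
end
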